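/- arXiv:1812.11809 — 2 statements merged into one kernel-verified Lean document; each statement's English description precedes it below -/
import Mathlib

section
/- In the fixed-stress error framework (continuous), assume additionally that there is β_s > 0 such that for every s ∈ Q there exists w ∈ U with D w = s and ‖E w‖ ≤ β_s⁻¹ ‖s‖, and that L ≥ 1/(λ + c_K²). Set ρ² := 1/(L⁻¹/(β_s⁻² + λ) + 1). Then for every m ≥ 0: ‖E e_u^m‖² + λ ‖D e_u^m‖² ≤ (λ + c_K²)⁻¹ ρ^{2m} ‖Σᵢ e_{p,i}^0‖². -/
/-!
Let `P = Σᵢ e_{p,i}` be the total pressure error and `X = ‖E e_u‖² + λ‖D e_u‖²` the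
displacement energy. Testing the elasticity equation with `e_u` and with an inf-sup preimage of
`P` gives `X = ⟪P, D e_u⟫` and `(λ + c_K²) X ≤ ‖P‖² ≤ (β_s⁻² + λ) X`. Testing the flow equations
with the new pressures, the Darcy and storage terms are nonnegative, so the new `P` is no longer
than `P - L⁻¹ D e_u`. Expanding that square and using `L⁻¹ ≤ λ + c_K²` removes at least
`L⁻¹ X ≥ L⁻¹ / (β_s⁻² + λ) ‖P‖²`, a fixed fraction of `‖P‖²`.
-/

open scoped RealInnerProductSpace MatrixOrder

theorem Matrix.PosSemidef.sum_mul_inner_nonneg {ι Q : Type*} [Fintype ι]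
    [NormedAddCommGroup Q] [InnerProductSpace ℝ Q]
    {M : Matrix ι ι ℝ} (hM : M.PosSemidef) (p : ι → Q) :
    0 ≤ ∑ i, ∑ j, M i j * ⟪p j, p i⟫ := by
  classical
  obtain ⟨B, rfl⟩ := CStarAlgebra.nonneg_iff_eq_star_mul_self.mp hM.nonneg
  have h := Finset.sum_nonneg fun k (_ : k ∈ Finset.univ) =>
    real_inner_self_nonneg (x := ∑ j, B k j • p j)
  simp only [inner_sum, sum_inner, real_inner_smul_left, real_inner_smul_right] at h
  simp only [Matrix.mul_apply, Matrix.star_apply, star_trivial, Finset.sum_mul]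
  refine h.trans_eq ?_
  rw [Finset.sum_comm]
  refine Finset.sum_congr rfl fun i _ => ?_
  rw [Finset.sum_comm]
  simp only [mul_assoc]

section FixedStress

variable {ι Q : Type*} [Fintype ι] [NormedAddCommGroup Q] [InnerProductSpace ℝ Q]
  {V : ι → Type*} [∀ i, NormedAddCommGroup (V i)] [∀ i, InnerProductSpace ℝ (V i)]

theorem norm_sq_sum_le_of_fixedStress_step (Dv : ∀ i, V i → Q) {Rinv : ι → ℝ}
    (hRinv : ∀ i, 0 ≤ Rinv i) {M : Matrix ι ι ℝ} (hM : M.PosSemidef) {L : ℝ} (hL : 0 < L)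
    {p p' : ι → Q} {v' : ∀ i, V i} {g : Q}
    (hflow : -(∑ i, ⟪Dv i (v' i), p' i⟫) - ∑ i, ∑ j, M i j * ⟪p' j, p' i⟫
        - L * ⟪∑ j, p' j, ∑ i, p' i⟫ = -(L * ⟪∑ j, p j, ∑ i, p' i⟫) + ⟪g, ∑ i, p' i⟫)
    (hdarcy : ∑ i, Rinv i * ⟪v' i, v' i⟫ - ∑ i, ⟪p' i, Dv i (v' i)⟫ = 0) :
    ‖∑ i, p' i‖ ^ 2 ≤ ‖∑ i, p i - L⁻¹ • g‖ ^ 2 := by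
  set P' := ∑ i, p' i
  have hdarcy_nonneg : 0 ≤ ∑ i, ⟪Dv i (v' i), p' i⟫ := by
    simp_rw [real_inner_comm (p' _)]
    rw [← sub_eq_zero.mp hdarcy]
    exact Finset.sum_nonneg fun i _ => mul_nonneg (hRinv i) real_inner_self_nonneg
  have hstorage_nonneg := hM.sum_mul_inner_nonneg p'
  have hP' : ‖P'‖ ^ 2 ≤ ⟪∑ i, p i - L⁻¹ • g, P'⟫ := by
    rw [inner_sub_left, real_inner_smul_left, ← real_inner_self_eq_norm_sq]
    refine le_of_mul_le_mul_left ?_ hL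
    rw [mul_sub, mul_inv_cancel_left₀ hL.ne']
    linarith
  have hCS := real_inner_le_norm (∑ i, p i - L⁻¹ • g) P'
  nlinarith [sq_nonneg (‖P'‖ - ‖∑ i, p i - L⁻¹ • g‖)]

end FixedStress

section Elasticity

variable {U H Q : Type*} [NormedAddCommGroup H] [NormedAddCommGroup Q]
  {E : U → H} {D : U → Q} {lam cK : ℝ} {u : U}

theorem mul_norm_sq_le_energy_of_korn (hcK : 0 ≤ cK) (hKorn : cK * ‖D u‖ ≤ ‖E u‖) :
    (lam + cK ^ 2) * ‖D u‖ ^ 2 ≤ ‖E u‖ ^ 2 + lam * ‖D u‖ ^ 2 := by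
  have h := pow_le_pow_left₀ (by positivity) hKorn 2
  rw [mul_pow] at h
  linarith

variable [InnerProductSpace ℝ H] [InnerProductSpace ℝ Q] {p : Q}

theorem energy_eq_inner (hu : ∀ w, ⟪E u, E w⟫ + lam * ⟪D u, D w⟫ = ⟪p, D w⟫) :
    ‖E u‖ ^ 2 + lam * ‖D u‖ ^ 2 = ⟪p, D u⟫ := by
  simpa only [real_inner_self_eq_norm_sq] using hu u

theorem mul_energy_le_norm_sq (hu : ∀ w, ⟪E u, E w⟫ + lam * ⟪D u, D w⟫ = ⟪p, D w⟫)
    (hlam : 0 ≤ lam) (hcK : 0 ≤ cK) (hKorn : cK * ‖D u‖ ≤ ‖E u‖) :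
    (lam + cK ^ 2) * (‖E u‖ ^ 2 + lam * ‖D u‖ ^ 2) ≤ ‖p‖ ^ 2 := by
  have hc : 0 ≤ lam + cK ^ 2 := by positivity
  have hCS := mul_le_mul_of_nonneg_left
    ((energy_eq_inner hu).trans_le (real_inner_le_norm p (D u))) hc
  have hK := mul_le_mul_of_nonneg_left (mul_norm_sq_le_energy_of_korn (lam := lam) hcK hKorn) hc
  nlinarith [sq_nonneg (‖p‖ - (lam + cK ^ 2) * ‖D u‖)]

theorem norm_sq_le_mul_energy_of_infsup (hu : ∀ w, ⟪E u, E w⟫ + lam * ⟪D u, D w⟫ = ⟪p, D w⟫)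
    (hlam : 0 ≤ lam) {w : U} {b : ℝ} (hw : D w = p) (hEw : ‖E w‖ ≤ b * ‖p‖) :
    ‖p‖ ^ 2 ≤ (b ^ 2 + lam) * (‖E u‖ ^ 2 + lam * ‖D u‖ ^ 2) := by
  have hp : ‖p‖ ^ 2 ≤ (b * ‖E u‖ + lam * ‖D u‖) * ‖p‖ := by
    have h := hu w
    rw [hw, real_inner_self_eq_norm_sq] at h
    have hE := (real_inner_le_norm (E u) (E w)).trans
      (mul_le_mul_of_nonneg_left hEw (norm_nonneg _))
    have hD := mul_le_mul_of_nonneg_left (real_inner_le_norm (D u) p) hlam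
    nlinarith
  have hCS : (b * ‖E u‖ + lam * ‖D u‖) ^ 2 ≤ (b ^ 2 + lam) * (‖E u‖ ^ 2 + lam * ‖D u‖ ^ 2) := by
    nlinarith [mul_nonneg hlam (sq_nonneg (‖E u‖ - b * ‖D u‖))]
  nlinarith [sq_nonneg (‖p‖ - (b * ‖E u‖ + lam * ‖D u‖))]

end Elasticity

theorem norm_sub_inv_smul_sq_le {Q : Type*} [NormedAddCommGroup Q] [InnerProductSpace ℝ Q]
    {P g : Q} {L κ X : ℝ} (hL : 0 < L) (hκ : 0 < κ)
    (hPg : ⟪P, g⟫ = X) (hg : L⁻¹ * ‖g‖ ^ 2 ≤ X) (hP : ‖P‖ ^ 2 ≤ κ * X) :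
    ‖P - L⁻¹ • g‖ ^ 2 ≤ 1 / (L⁻¹ / κ + 1) * ‖P‖ ^ 2 := by
  have hexpand : ‖P - L⁻¹ • g‖ ^ 2 = ‖P‖ ^ 2 - 2 * L⁻¹ * X + L⁻¹ * (L⁻¹ * ‖g‖ ^ 2) := by
    rw [norm_sub_sq_real, real_inner_smul_right, norm_smul,
      Real.norm_of_nonneg (inv_nonneg.2 hL.le), hPg]
    ring
  set a := L⁻¹ / κ
  have ha : 0 < a := by positivity
  have haX : a * ‖P‖ ^ 2 ≤ L⁻¹ * X := by
    calc a * ‖P‖ ^ 2 ≤ a * (κ * X) := mul_le_mul_of_nonneg_left hP ha.le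
      _ = L⁻¹ * X := by rw [← mul_assoc, div_mul_cancel₀ _ hκ.ne']
  have hgap : 1 - a ≤ 1 / (a + 1) := by
    rw [le_div_iff₀ (by positivity)]
    nlinarith
  calc ‖P - L⁻¹ • g‖ ^ 2 ≤ (1 - a) * ‖P‖ ^ 2 := by
        rw [hexpand]
        nlinarith [mul_le_mul_of_nonneg_left hg (inv_nonneg.2 hL.le)]
    _ ≤ 1 / (a + 1) * ‖P‖ ^ 2 := mul_le_mul_of_nonneg_right hgap (sq_nonneg _)

theorem fixed_stress_displacement_decay_general
    {U H Q : Type*}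
    [NormedAddCommGroup U] [InnerProductSpace ℝ U]
    [NormedAddCommGroup H] [InnerProductSpace ℝ H]
    [NormedAddCommGroup Q] [InnerProductSpace ℝ Q]
    (n : ℕ)
    (V : Fin n → Type*)
    [∀ i, NormedAddCommGroup (V i)] [∀ i, InnerProductSpace ℝ (V i)]
    (E : U →L[ℝ] H) (D : U →L[ℝ] Q) (Dv : ∀ i, V i →L[ℝ] Q)
    (lam L cK : ℝ) (Rinv : Fin n → ℝ)
    (hlam : 0 < lam) (hL : 0 < L) (hRinv : ∀ i, 0 < Rinv i) (hcK : 0 < cK)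
    (M : Matrix (Fin n) (Fin n) ℝ) (hM : M.PosSemidef)
    (hKorn : ∀ w : U, cK * ‖D w‖ ≤ ‖E w‖)
    (eu : ℕ → U) (ev : ℕ → ∀ i, V i) (ep : ℕ → Fin n → Q)
    (heq1 : ∀ (m : ℕ) (q : Fin n → Q),
      -(∑ i, ⟪Dv i (ev (m + 1) i), q i⟫)
          - ∑ i, ∑ j, M i j * ⟪ep (m + 1) j, q i⟫
          - L * ⟪∑ j, ep (m + 1) j, ∑ i, q i⟫
        = -(L * ⟪∑ j, ep m j, ∑ i, q i⟫) + ⟪D (eu m), ∑ i, q i⟫)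
    (heq2 : ∀ (m : ℕ) (z : ∀ i, V i),
      ∑ i, Rinv i * ⟪ev (m + 1) i, z i⟫ - ∑ i, ⟪ep (m + 1) i, Dv i (z i)⟫ = 0)
    (heq3 : ∀ (m : ℕ) (w : U),
      ⟪E (eu m), E w⟫ + lam * ⟪D (eu m), D w⟫ = ⟪∑ i, ep m i, D w⟫)
    (hLge : 1 / (lam + cK ^ 2) ≤ L)
    (βs : ℝ)
    (hinfsup : ∀ s : Q, ∃ w : U, D w = s ∧ ‖E w‖ ≤ βs⁻¹ * ‖s‖)
    (ρ2 : ℝ) (hρ2 : ρ2 = 1 / (L⁻¹ / ((βs ^ 2)⁻¹ + lam) + 1)) :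
    ∀ m : ℕ,
      ‖E (eu m)‖ ^ 2 + lam * ‖D (eu m)‖ ^ 2
        ≤ (lam + cK ^ 2)⁻¹ * ρ2 ^ m * ‖∑ i, ep 0 i‖ ^ 2 := by
  have hc : 0 < lam + cK ^ 2 := by positivity
  have hLinv : L⁻¹ ≤ lam + cK ^ 2 := by
    rw [one_div] at hLge
    exact inv_le_of_inv_le₀ hc hLge
  have hρ2_nonneg : 0 ≤ ρ2 := by rw [hρ2]; positivity
  have hcontract : ∀ m, ‖∑ i, ep (m + 1) i‖ ^ 2 ≤ ρ2 * ‖∑ i, ep m i‖ ^ 2 := fun m => by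
    obtain ⟨w, hw, hEw⟩ := hinfsup (∑ i, ep m i)
    refine (norm_sq_sum_le_of_fixedStress_step (fun i => Dv i) (fun i => (hRinv i).le) hM hL
      (heq1 m (ep (m + 1))) (heq2 m (ev (m + 1)))).trans ?_
    rw [hρ2]
    refine norm_sub_inv_smul_sq_le hL (by positivity) (energy_eq_inner (heq3 m)).symm ?_ ?_
    · exact (mul_le_mul_of_nonneg_right hLinv (sq_nonneg _)).trans
        (mul_norm_sq_le_energy_of_korn hcK.le (hKorn _))
    · rw [← inv_pow]
      exact norm_sq_le_mul_energy_of_infsup (heq3 m) hlam.le hw hEw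
  intro m
  rw [mul_assoc, inv_mul_eq_div, le_div_iff₀' hc]
  exact (mul_energy_le_norm_sq (heq3 m) hlam.le hcK.le (hKorn _)).trans
    (le_geom (u := fun k => ‖∑ i, ep k i‖ ^ 2) hρ2_nonneg m fun k _ => hcontract k)

/-- Displacement estimate (error_eu) of Theorem 3: under the abstract Stokes inf-sup
condition and L ≥ 1/(λ + c_K²), with ρ² = 1/(L⁻¹/(β_s⁻² + λ) + 1), the displacement
errors satisfy ‖E e_u^m‖² + λ‖D e_u^m‖² ≤ (λ + c_K²)⁻¹ ρ^{2m} ‖Σᵢ e_{p,i}^0‖². -/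
theorem fixed_stress_displacement_decay
    {U H Q : Type*}
    [NormedAddCommGroup U] [InnerProductSpace ℝ U] [CompleteSpace U]
    [NormedAddCommGroup H] [InnerProductSpace ℝ H] [CompleteSpace H]
    [NormedAddCommGroup Q] [InnerProductSpace ℝ Q] [CompleteSpace Q]
    (n : ℕ) (hn : 1 ≤ n)
    (V : Fin n → Type*)
    [∀ i, NormedAddCommGroup (V i)] [∀ i, InnerProductSpace ℝ (V i)]
    [∀ i, CompleteSpace (V i)]
    (E : U →L[ℝ] H) (D : U →L[ℝ] Q) (Dv : ∀ i, V i →L[ℝ] Q)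
    (lam L cK : ℝ) (Rinv : Fin n → ℝ)
    (hlam : 0 < lam) (hL : 0 < L) (hRinv : ∀ i, 0 < Rinv i) (hcK : 0 < cK)
    (M : Matrix (Fin n) (Fin n) ℝ) (hM : M.PosSemidef)
    (hKorn : ∀ w : U, cK * ‖D w‖ ≤ ‖E w‖)
    (eu : ℕ → U) (ev : ℕ → ∀ i, V i) (ep : ℕ → Fin n → Q)
    (heq1 : ∀ (m : ℕ) (q : Fin n → Q),
      -(∑ i, ⟪Dv i (ev (m + 1) i), q i⟫)
          - ∑ i, ∑ j, M i j * ⟪ep (m + 1) j, q i⟫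
          - L * ⟪∑ j, ep (m + 1) j, ∑ i, q i⟫
        = -(L * ⟪∑ j, ep m j, ∑ i, q i⟫) + ⟪D (eu m), ∑ i, q i⟫)
    (heq2 : ∀ (m : ℕ) (z : ∀ i, V i),
      ∑ i, Rinv i * ⟪ev (m + 1) i, z i⟫ - ∑ i, ⟪ep (m + 1) i, Dv i (z i)⟫ = 0)
    (heq3 : ∀ (m : ℕ) (w : U),
      ⟪E (eu m), E w⟫ + lam * ⟪D (eu m), D w⟫ = ⟪∑ i, ep m i, D w⟫)
    (hLge : 1 / (lam + cK ^ 2) ≤ L)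
    (βs : ℝ) (hβs : 0 < βs)
    (hinfsup : ∀ s : Q, ∃ w : U, D w = s ∧ ‖E w‖ ≤ βs⁻¹ * ‖s‖)
    (ρ2 : ℝ) (hρ2 : ρ2 = 1 / (L⁻¹ / ((βs ^ 2)⁻¹ + lam) + 1)) :
    ∀ m : ℕ,
      ‖E (eu m)‖ ^ 2 + lam * ‖D (eu m)‖ ^ 2
        ≤ (lam + cK ^ 2)⁻¹ * ρ2 ^ m * ‖∑ i, ep 0 i‖ ^ 2 :=
  fixed_stress_displacement_decay_general n V E D Dv lam L cK Rinv hlam hL hRinv hcK M hM hKorn eu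
    ev ep heq1 heq2 heq3 hLge βs hinfsup ρ2 hρ2
end

section
/- In the fixed-stress error framework (bilinear-form version), if L ≥ 1/(λ + c_{K_d}²), then for every m ≥ 0: (1/2)(a(e_u^{m+1}, e_u^{m+1}) + λ ‖D e_u^{m+1}‖²) + Σᵢ Rᵢ⁻¹ ‖e_{v,i}^{m+1}‖² + Σᵢ,ⱼ Mᵢⱼ ⟨e_{p,j}^{m+1}, e_{p,i}^{m+1}⟩ + (L/2) ‖Σᵢ e_{p,i}^{m+1}‖² ≤ (L/2) ‖Σᵢ e_{p,i}^m‖². -/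
/-!
Write `pᵏ = Σᵢ e_{p,i}^k`, `δp = p^{m+1} - p^m`, `δu = e_u^{m+1} - e_u^m` and
`b = a + λ ⟨D ·, D ·⟩`. Testing the flow equations with the new iterates shows that the
left-hand side minus `(L/2) ‖p^m‖²` equals `b(e_u^{m+1}, e_u^{m+1})/2 - ⟨D e_u^m, p^{m+1}⟩
- (L/2) ‖δp‖²`, after polarizing `L ⟨δp, p^{m+1}⟩`. The mechanics equation turns the coupling
term into `b(e_u^{m+1}, e_u^m)`, which polarizes into `(b(e_u^m, e_u^m) + b(e_u^{m+1}, e_u^{m+1})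
- b(δu, δu))/2`. Finally `δu` solves the mechanics equation with data `δp`, so Korn and
Cauchy–Schwarz give `(λ + c²) ‖D δu‖² ≤ b(δu, δu) ≤ ‖δp‖ ‖D δu‖`, hence
`b(δu, δu) ≤ ‖δp‖² / (λ + c²) ≤ L ‖δp‖²`.
-/

open scoped RealInnerProductSpace

section Mechanics

variable {U Q : Type*} [AddCommGroup U] [Module ℝ U]
  [NormedAddCommGroup Q] [InnerProductSpace ℝ Q]

noncomputable def elasticityForm (a : LinearMap.BilinForm ℝ U) (D : U →ₗ[ℝ] Q) (lam : ℝ) :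
    LinearMap.BilinForm ℝ U :=
  a + lam • (innerₗ Q).compl₁₂ D D

@[simp]
theorem elasticityForm_apply (a : LinearMap.BilinForm ℝ U) (D : U →ₗ[ℝ] Q) (lam : ℝ)
    (u w : U) : elasticityForm a D lam u w = a u w + lam * ⟪D u, D w⟫ :=
  rfl

namespace LinearMap.BilinForm

theorem IsSymm.apply_sub_self_eq {R M : Type*} [CommRing R] [AddCommGroup M] [Module R M]
    {b : LinearMap.BilinForm R M} (hb : b.IsSymm) (u u' : M) :
    b (u' - u) (u' - u) = b u u + b u' u' - 2 * b u' u := by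
  simp only [map_sub, LinearMap.sub_apply, hb.eq u u']
  ring

variable {b : LinearMap.BilinForm ℝ U} {D : U →ₗ[ℝ] Q} {β : ℝ} {u u' : U} {p p' : Q}

theorem apply_sub_self_le_of_coercive (hβ : 0 < β)
    (hcoer : ∀ w, β * ‖D w‖ ^ 2 ≤ b w w)
    (hu : ∀ w, b u w = ⟪p, D w⟫) (hu' : ∀ w, b u' w = ⟪p', D w⟫) :
    b (u' - u) (u' - u) ≤ ‖p' - p‖ ^ 2 / β := by
  have hinc : b (u' - u) (u' - u) = ⟪p' - p, D (u' - u)⟫ := by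
    simp only [map_sub, LinearMap.sub_apply, hu, hu', inner_sub_left, inner_sub_right]
  have hlow := hcoer (u' - u)
  have hup := hinc ▸ real_inner_le_norm (p' - p) (D (u' - u))
  rw [le_div_iff₀ hβ]
  nlinarith [sq_nonneg (‖p' - p‖ - β * ‖D (u' - u)‖)]

theorem apply_sub_norm_sq_le_two_mul_inner {L : ℝ} (hb : b.IsSymm) (hβ : 0 < β)
    (hcoer : ∀ w, β * ‖D w‖ ^ 2 ≤ b w w) (hLβ : 1 / β ≤ L)
    (hu : ∀ w, b u w = ⟪p, D w⟫) (hu' : ∀ w, b u' w = ⟪p', D w⟫) :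
    b u' u' - L * ‖p' - p‖ ^ 2 ≤ 2 * ⟪p', D u⟫ := by
  have hinc : b (u' - u) (u' - u) ≤ L * ‖p' - p‖ ^ 2 :=
    (apply_sub_self_le_of_coercive hβ hcoer hu hu').trans <| by
      rw [div_eq_mul_one_div, mul_comm]
      exact mul_le_mul_of_nonneg_right hLβ (sq_nonneg _)
  have hpos : 0 ≤ b u u := (mul_nonneg hβ.le (sq_nonneg _)).trans (hcoer u)
  rw [hb.apply_sub_self_eq] at hinc
  rw [← hu' u]
  linarith

end LinearMap.BilinForm

end Mechanics

section Flow

variable {Q : Type*} [NormedAddCommGroup Q] [InnerProductSpace ℝ Q]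
  {n : ℕ} {V : Fin n → Type*} [∀ i, NormedAddCommGroup (V i)] [∀ i, InnerProductSpace ℝ (V i)]

theorem flow_energy_identity {Dv : ∀ i, V i → Q} {M : Matrix (Fin n) (Fin n) ℝ}
    {L : ℝ} {Rinv : Fin n → ℝ} {g : Q} {p₀ p : Fin n → Q} {v : ∀ i, V i}
    (hmass : ∀ q : Fin n → Q,
      -(∑ i, ⟪Dv i (v i), q i⟫) - ∑ i, ∑ j, M i j * ⟪p j, q i⟫ - L * ⟪∑ j, p j, ∑ i, q i⟫
        = -(L * ⟪∑ j, p₀ j, ∑ i, q i⟫) + ⟪g, ∑ i, q i⟫)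
    (hdarcy : ∀ z : ∀ i, V i, ∑ i, Rinv i * ⟪v i, z i⟫ - ∑ i, ⟪p i, Dv i (z i)⟫ = 0) :
    ∑ i, Rinv i * ‖v i‖ ^ 2 + ∑ i, ∑ j, M i j * ⟪p j, p i⟫
        + L * ⟪∑ i, p i - ∑ i, p₀ i, ∑ i, p i⟫ + ⟪∑ i, p i, g⟫ = 0 := by
  have hm := hmass p
  have hd := hdarcy v
  have hcomm : ∑ i, ⟪Dv i (v i), p i⟫ = ∑ i, ⟪p i, Dv i (v i)⟫ :=
    Finset.sum_congr rfl fun i _ => real_inner_comm _ _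
  simp only [real_inner_self_eq_norm_sq] at hd
  rw [inner_sub_left, mul_sub, real_inner_comm g]
  linarith

end Flow

theorem fixed_stress_lemma_discrete_general
    {U Q : Type*}
    [NormedAddCommGroup U] [InnerProductSpace ℝ U]
    [NormedAddCommGroup Q] [InnerProductSpace ℝ Q]
    (n : ℕ)
    (V : Fin n → Type*)
    [∀ i, NormedAddCommGroup (V i)] [∀ i, InnerProductSpace ℝ (V i)]
    (a : U →ₗ[ℝ] U →ₗ[ℝ] ℝ)
    (hasymm : ∀ u w : U, a u w = a w u)
    (D : U →L[ℝ] Q) (Dv : ∀ i, V i →L[ℝ] Q)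
    (lam L cKd : ℝ) (Rinv : Fin n → ℝ)
    (hlam : 0 < lam)
    (M : Matrix (Fin n) (Fin n) ℝ)
    (hKorn : ∀ w : U, cKd ^ 2 * ‖D w‖ ^ 2 ≤ a w w)
    (eu : ℕ → U) (ev : ℕ → ∀ i, V i) (ep : ℕ → Fin n → Q)
    (heq1 : ∀ (m : ℕ) (q : Fin n → Q),
      -(∑ i, ⟪Dv i (ev (m + 1) i), q i⟫)
          - ∑ i, ∑ j, M i j * ⟪ep (m + 1) j, q i⟫
          - L * ⟪∑ j, ep (m + 1) j, ∑ i, q i⟫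
        = -(L * ⟪∑ j, ep m j, ∑ i, q i⟫) + ⟪D (eu m), ∑ i, q i⟫)
    (heq2 : ∀ (m : ℕ) (z : ∀ i, V i),
      ∑ i, Rinv i * ⟪ev (m + 1) i, z i⟫ - ∑ i, ⟪ep (m + 1) i, Dv i (z i)⟫ = 0)
    (heq3 : ∀ (m : ℕ) (w : U),
      a (eu m) w + lam * ⟪D (eu m), D w⟫ = ⟪∑ i, ep m i, D w⟫)
    (hLge : 1 / (lam + cKd ^ 2) ≤ L) :
    ∀ m : ℕ,
      (1 / 2) * (a (eu (m + 1)) (eu (m + 1)) + lam * ‖D (eu (m + 1))‖ ^ 2)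
          + ∑ i, Rinv i * ‖ev (m + 1) i‖ ^ 2
          + ∑ i, ∑ j, M i j * ⟪ep (m + 1) j, ep (m + 1) i⟫
          + (L / 2) * ‖∑ i, ep (m + 1) i‖ ^ 2
        ≤ (L / 2) * ‖∑ i, ep m i‖ ^ 2 := by
  intro m
  set b := elasticityForm a (D : U →ₗ[ℝ] Q) lam
  have hsymm : b.IsSymm := ⟨fun u w => by simp [b, hasymm u w, real_inner_comm]⟩
  have hcoer (w : U) : (lam + cKd ^ 2) * ‖D w‖ ^ 2 ≤ b w w := by
    simp only [b, elasticityForm_apply, ContinuousLinearMap.coe_coe, real_inner_self_eq_norm_sq]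
    linarith [hKorn w]
  have hsol (k : ℕ) (w : U) : b (eu k) w = ⟪∑ i, ep k i, D w⟫ := heq3 k w
  have hcoupling := LinearMap.BilinForm.apply_sub_norm_sq_le_two_mul_inner hsymm
    (by positivity) hcoer hLge (hsol m) (hsol (m + 1))
  have hflow := flow_energy_identity (Dv := fun i => Dv i) (heq1 m) (heq2 m)
  have hpolar : ⟪∑ i, ep (m + 1) i - ∑ i, ep m i, ∑ i, ep (m + 1) i⟫
      = (‖∑ i, ep (m + 1) i‖ ^ 2 - ‖∑ i, ep m i‖ ^ 2
        + ‖∑ i, ep (m + 1) i - ∑ i, ep m i‖ ^ 2) / 2 := by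
    rw [norm_sub_sq_real, inner_sub_left, real_inner_self_eq_norm_sq, real_inner_comm]
    ring
  rw [hpolar] at hflow
  simp only [b, elasticityForm_apply, ContinuousLinearMap.coe_coe,
    real_inner_self_eq_norm_sq] at hcoupling
  linarith

/-- Lemma 4 of the paper (discrete analogue of Lemma 1): in the fixed-stress error
framework (bilinear-form version), if L ≥ 1/(λ + c_{K_d}²), then for every m ≥ 0 the
errors of the (m+1)-st fixed-stress iterate satisfy the contraction-type energy
estimate. -/
theorem fixed_stress_lemma_discrete
    {U Q : Type*}
    [NormedAddCommGroup U] [InnerProductSpace ℝ U] [CompleteSpace U]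
    [NormedAddCommGroup Q] [InnerProductSpace ℝ Q] [CompleteSpace Q]
    (n : ℕ) (hn : 1 ≤ n)
    (V : Fin n → Type*)
    [∀ i, NormedAddCommGroup (V i)] [∀ i, InnerProductSpace ℝ (V i)]
    [∀ i, CompleteSpace (V i)]
    (a : U →ₗ[ℝ] U →ₗ[ℝ] ℝ)
    (hasymm : ∀ u w : U, a u w = a w u) (hapsd : ∀ u : U, 0 ≤ a u u)
    (D : U →L[ℝ] Q) (Dv : ∀ i, V i →L[ℝ] Q)
    (lam L cKd : ℝ) (Rinv : Fin n → ℝ)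
    (hlam : 0 < lam) (hL : 0 < L) (hRinv : ∀ i, 0 < Rinv i) (hcKd : 0 < cKd)
    (M : Matrix (Fin n) (Fin n) ℝ) (hM : M.PosSemidef)
    (hKorn : ∀ w : U, cKd ^ 2 * ‖D w‖ ^ 2 ≤ a w w)
    (eu : ℕ → U) (ev : ℕ → ∀ i, V i) (ep : ℕ → Fin n → Q)
    (heq1 : ∀ (m : ℕ) (q : Fin n → Q),
      -(∑ i, ⟪Dv i (ev (m + 1) i), q i⟫)
          - ∑ i, ∑ j, M i j * ⟪ep (m + 1) j, q i⟫
          - L * ⟪∑ j, ep (m + 1) j, ∑ i, q i⟫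
        = -(L * ⟪∑ j, ep m j, ∑ i, q i⟫) + ⟪D (eu m), ∑ i, q i⟫)
    (heq2 : ∀ (m : ℕ) (z : ∀ i, V i),
      ∑ i, Rinv i * ⟪ev (m + 1) i, z i⟫ - ∑ i, ⟪ep (m + 1) i, Dv i (z i)⟫ = 0)
    (heq3 : ∀ (m : ℕ) (w : U),
      a (eu m) w + lam * ⟪D (eu m), D w⟫ = ⟪∑ i, ep m i, D w⟫)
    (hLge : 1 / (lam + cKd ^ 2) ≤ L) :
    ∀ m : ℕ,
      (1 / 2) * (a (eu (m + 1)) (eu (m + 1)) + lam * ‖D (eu (m + 1))‖ ^ 2)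
          + ∑ i, Rinv i * ‖ev (m + 1) i‖ ^ 2
          + ∑ i, ∑ j, M i j * ⟪ep (m + 1) j, ep (m + 1) i⟫
          + (L / 2) * ‖∑ i, ep (m + 1) i‖ ^ 2
        ≤ (L / 2) * ‖∑ i, ep m i‖ ^ 2 :=
  fixed_stress_lemma_discrete_general n V a hasymm D Dv lam L cKd Rinv hlam M hKorn eu ev ep heq1
    heq2 heq3 hLge
end
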